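/- Let p > 2, N ≥ 1, and ε, η, K > 0. For ξ ∈ ℝᴺ \ {0} define the symmetric matrix B(ξ) = |ξ|^{(p−2)/2}(Id + (√(p−1) − 1) ξξᵀ/|ξ|²) and F(ξ, X) = −Tr(B(ξ)B(ξ)ᵀ X) for X in the space S(N) of real symmetric N×N matrices (so that F(Du, D²u) = −div(|Du|^{p−2}Du) for smooth u with Du ≠ 0). If X, Y ∈ S(N) satisfy the block matrix inequality (X, 0; 0, −Y) ≤ (K/ε²)(Id, −Id; −Id, Id) + Kη·Id on ℝ^{2N}, then for all nonzero ξ₁, ξ₂ ∈ ℝᴺ: F(ξ₂, Y) − F(ξ₁, X) ≤ (K/ε²) Tr((B(ξ₁) − B(ξ₂))ᵀ(B(ξ₁) − B(ξ₂))) + Kη (Tr(B(ξ₁)ᵀB(ξ₁)) + Tr(B(ξ₂)ᵀB(ξ₂))). -/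

import Mathlib

/-!
Conjugating the positive semidefinite block matrix
`(K/ε²)(Id, -Id; -Id, Id) + Kη·Id - (X, 0; 0, -Y)` by the column `(B(ξ₁); B(ξ₂))` and taking
the trace gives a nonnegative number; expanding it, the `X` and `Y` blocks produce
`F(ξ₂, Y) - F(ξ₁, X)` by cyclicity of the trace, and the remaining blocks produce the right-hand
side.
-/

open scoped Matrix

noncomputable section

/-- The Euclidean norm of a vector `ξ ∈ ℝᴺ`. -/
def nrmV {N : ℕ} (ξ : Fin N → ℝ) : ℝ := Real.sqrt (∑ i, ξ i ^ 2)

/-- `B(ξ) = |ξ|^{(p-2)/2} (Id + (√(p-1) - 1) ξξᵀ/|ξ|²)`. -/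
def Bmat {N : ℕ} (p : ℝ) (ξ : Fin N → ℝ) : Matrix (Fin N) (Fin N) ℝ :=
  (nrmV ξ) ^ ((p - 2) / 2) •
    ((1 : Matrix (Fin N) (Fin N) ℝ) +
      (Real.sqrt (p - 1) - 1) • (((nrmV ξ) ^ 2)⁻¹ • Matrix.vecMulVec ξ ξ))

/-- `F(ξ, X) = -Tr(B(ξ) B(ξ)ᵀ X)`, so that `F(Du, D²u) = -div(|Du|^{p-2}Du)`. -/
def Fop {N : ℕ} (p : ℝ) (ξ : Fin N → ℝ) (X : Matrix (Fin N) (Fin N) ℝ) : ℝ :=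
  -(Bmat p ξ * (Bmat p ξ)ᵀ * X).trace

namespace Matrix

theorem PosSemidef.trace_fromBlocks_conj_nonneg {m n k : Type*} [Fintype m] [Fintype n]
    [Fintype k] {A : Matrix m m ℝ} {B : Matrix m n ℝ} {C : Matrix n m ℝ} {D : Matrix n n ℝ}
    (h : (fromBlocks A B C D).PosSemidef) (P : Matrix m k ℝ) (Q : Matrix n k ℝ) :
    0 ≤ (Pᵀ * A * P + Pᵀ * B * Q + (Qᵀ * C * P + Qᵀ * D * Q)).trace := by
  have := (h.conjTranspose_mul_mul_same (fromRows P Q)).trace_nonneg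
  rwa [conjTranspose_eq_transpose_of_trivial, transpose_fromRows, fromCols_mul_fromBlocks,
    fromCols_mul_fromRows, Matrix.add_mul, Matrix.add_mul, add_add_add_comm] at this

theorem trace_sub_le_of_fromBlocks_le {n k : Type*} [Fintype n] [DecidableEq n] [Fintype k]
    {a b : ℝ} {X Y : Matrix n n ℝ}
    (h : (a • fromBlocks (1 : Matrix n n ℝ) (-1) (-1) 1 + b • (1 : Matrix (n ⊕ n) (n ⊕ n) ℝ)
      - fromBlocks X 0 0 (-Y)).PosSemidef) (B₁ B₂ : Matrix n k ℝ) :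
    (B₁ * B₁ᵀ * X).trace - (B₂ * B₂ᵀ * Y).trace ≤
      a * ((B₁ - B₂)ᵀ * (B₁ - B₂)).trace + b * ((B₁ᵀ * B₁).trace + (B₂ᵀ * B₂).trace) := by
  rw [← fromBlocks_one, fromBlocks_smul, fromBlocks_smul, fromBlocks_add, sub_eq_add_neg,
    fromBlocks_neg, fromBlocks_add] at h
  have hpos := h.trace_fromBlocks_conj_nonneg B₁ B₂
  have hcross : (B₂ᵀ * B₁).trace = (B₁ᵀ * B₂).trace := by
    rw [← trace_transpose, transpose_mul, transpose_transpose]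
  rw [← trace_mul_cycle B₁ᵀ X B₁, ← trace_mul_cycle B₂ᵀ Y B₂]
  simp only [Matrix.mul_add, Matrix.add_mul, Matrix.mul_smul, Matrix.smul_mul, Matrix.mul_one,
    Matrix.mul_neg, Matrix.neg_mul, smul_zero, smul_neg, neg_neg, neg_zero, add_zero, trace_add,
    trace_neg, trace_smul, smul_eq_mul] at hpos
  simp only [transpose_sub, Matrix.mul_sub, Matrix.sub_mul, trace_sub]
  linarith

end Matrix

theorem statement19_general {N : ℕ} (p ε η K : ℝ)
    (X Y : Matrix (Fin N) (Fin N) ℝ)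
    (hblock : ((K / ε ^ 2) •
          Matrix.fromBlocks (1 : Matrix (Fin N) (Fin N) ℝ) (-1) (-1) 1
        + (K * η) • (1 : Matrix (Fin N ⊕ Fin N) (Fin N ⊕ Fin N) ℝ)
        - Matrix.fromBlocks X 0 0 (-Y)).PosSemidef)
    (ξ₁ ξ₂ : Fin N → ℝ) :
    Fop p ξ₂ Y - Fop p ξ₁ X ≤
      K / ε ^ 2 * ((Bmat p ξ₁ - Bmat p ξ₂)ᵀ * (Bmat p ξ₁ - Bmat p ξ₂)).trace
        + K * η * (((Bmat p ξ₁)ᵀ * Bmat p ξ₁).trace + ((Bmat p ξ₂)ᵀ * Bmat p ξ₂).trace) := by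
  have := Matrix.trace_sub_le_of_fromBlocks_le hblock (Bmat p ξ₁) (Bmat p ξ₂)
  rw [Fop, Fop]
  linarith

/-- The structure inequality for the `p`-Laplace operator used
to verify Barles' condition (H5-1): if `(X, 0; 0, -Y) ≤ (K/ε²)(Id, -Id; -Id, Id) + Kη·Id`
in the Loewner order on symmetric `2N×2N` matrices, then for all nonzero
`ξ₁, ξ₂ ∈ ℝᴺ`,
`F(ξ₂,Y) - F(ξ₁,X) ≤ (K/ε²) Tr((B(ξ₁)-B(ξ₂))ᵀ(B(ξ₁)-B(ξ₂)))
  + Kη (Tr(B(ξ₁)ᵀB(ξ₁)) + Tr(B(ξ₂)ᵀB(ξ₂)))`. -/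
theorem statement19 {N : ℕ} (hN : 1 ≤ N) (p ε η K : ℝ)
    (hp : 2 < p) (hε : 0 < ε) (hη : 0 < η) (hK : 0 < K)
    (X Y : Matrix (Fin N) (Fin N) ℝ) (hX : X.IsSymm) (hY : Y.IsSymm)
    (hblock : ((K / ε ^ 2) •
          Matrix.fromBlocks (1 : Matrix (Fin N) (Fin N) ℝ) (-1) (-1) 1
        + (K * η) • (1 : Matrix (Fin N ⊕ Fin N) (Fin N ⊕ Fin N) ℝ)
        - Matrix.fromBlocks X 0 0 (-Y)).PosSemidef)
    (ξ₁ ξ₂ : Fin N → ℝ) (h₁ : ξ₁ ≠ 0) (h₂ : ξ₂ ≠ 0) :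
    Fop p ξ₂ Y - Fop p ξ₁ X ≤
      K / ε ^ 2 * ((Bmat p ξ₁ - Bmat p ξ₂)ᵀ * (Bmat p ξ₁ - Bmat p ξ₂)).trace
        + K * η * (((Bmat p ξ₁)ᵀ * Bmat p ξ₁).trace + ((Bmat p ξ₂)ᵀ * Bmat p ξ₂).trace) :=
  statement19_general p ε η K X Y hblock ξ₁ ξ₂

end
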